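/- Let Γ be a finite simplicial graph which is a join, i.e., its vertex set can be partitioned into two nonempty sets V₁ and V₂ such that every vertex of V₁ is adjacent to every vertex of V₂. Then the right-angled Coxeter group G_Γ contains no infinite proper malnormal subgroup. -/

import Mathlib

open scoped Pointwise ENNReal

namespace RACGPaper

/-- The defining relations of the right-angled Coxeter group of a simple graph. -/
def racgRels {V : Type*} (Γ : SimpleGraph V) : Set (FreeGroup V) :=
  {r | (∃ v : V, r = FreeGroup.of v * FreeGroup.of v) ∨
       (∃ v w : V, Γ.Adj v w ∧ r = (FreeGroup.of v * FreeGroup.of w) ^ 2)}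

/-- The right-angled Coxeter group of a simple graph. -/
def RACG {V : Type*} (Γ : SimpleGraph V) : Type _ := PresentedGroup (racgRels Γ)

instance {V : Type*} (Γ : SimpleGraph V) : Group (RACG Γ) :=
  inferInstanceAs (Group (PresentedGroup (racgRels Γ)))

/-- The generator of `RACG Γ` corresponding to a vertex. -/
def gen {V : Type*} (Γ : SimpleGraph V) (v : V) : RACG Γ := PresentedGroup.of v

/-- Word length with respect to the vertex generators (which are involutions). -/
noncomputable def len {V : Type*} (Γ : SimpleGraph V) (g : RACG Γ) : ℕ :=
  sInf {n | ∃ l : List V, l.length = n ∧ (l.map (gen Γ)).prod = g}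

/-- The word metric on `RACG Γ`. -/
noncomputable def wdist {V : Type*} (Γ : SimpleGraph V) (g h : RACG Γ) : ℕ :=
  len Γ (g⁻¹ * h)

/-- Distance from a point to a subgroup. -/
noncomputable def distH {V : Type*} (Γ : SimpleGraph V) (H : Subgroup (RACG Γ))
    (x : RACG Γ) : ℕ :=
  sInf {n | ∃ h ∈ H, wdist Γ x h = n}

/-- A `(K, C)`-quasi-geodesic defined on the integer interval `[a, b]`. -/
def IsQuasiGeodesic {V : Type*} (Γ : SimpleGraph V) (K C : ℝ) (a b : ℤ)
    (γ : ℤ → RACG Γ) : Prop :=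
  ∀ i ∈ Set.Icc a b, ∀ j ∈ Set.Icc a b,
    |(i : ℝ) - (j : ℝ)| / K - C ≤ (wdist Γ (γ i) (γ j) : ℝ) ∧
    (wdist Γ (γ i) (γ j) : ℝ) ≤ K * |(i : ℝ) - (j : ℝ)| + C

/-- A subgroup is strongly quasiconvex if every quasi-geodesic with endpoints on it
stays uniformly close to it. -/
def StronglyQuasiconvex {V : Type*} (Γ : SimpleGraph V) (H : Subgroup (RACG Γ)) : Prop :=
  ∀ K C : ℝ, 1 ≤ K → 0 ≤ C → ∃ M : ℝ, 0 ≤ M ∧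
    ∀ (a b : ℤ) (γ : ℤ → RACG Γ), IsQuasiGeodesic Γ K C a b γ →
      γ a ∈ H → γ b ∈ H → ∀ i ∈ Set.Icc a b, (distH Γ H (γ i) : ℝ) ≤ M

/-- `H` is malnormal: `gHg⁻¹ ∩ H = {1}` for every `g ∉ H`. -/
def Malnormal {G : Type*} [Group G] (H : Subgroup G) : Prop :=
  ∀ g : G, g ∉ H → ∀ x : G, x ∈ H → g⁻¹ * x * g ∈ H → x = 1

/-- `H` is almost malnormal: `gHg⁻¹ ∩ H` is finite for every `g ∉ H`. -/
def AlmostMalnormal {G : Type*} [Group G] (H : Subgroup G) : Prop :=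
  ∀ g : G, g ∉ H → {x : G | x ∈ H ∧ g⁻¹ * x * g ∈ H}.Finite

/-- An almost malnormal collection of subgroups. -/
def AlmostMalnormalColl {G : Type*} [Group G] (𝓗 : Set (Subgroup G)) : Prop :=
  ∀ H ∈ 𝓗, ∀ H' ∈ 𝓗, ∀ g : G,
    {x : G | x ∈ H ∧ g⁻¹ * x * g ∈ (H' : Subgroup G)}.Infinite → H = H' ∧ g ∈ H

/-- A group is virtually free if it has a free subgroup of finite index. -/
def VirtuallyFree (G : Type*) [Group G] : Prop :=
  ∃ F : Subgroup G, F.FiniteIndex ∧ IsFreeGroup F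

/-- A set of vertices spans a join subgraph. -/
def IsJoin {V : Type*} (Γ : SimpleGraph V) (J : Set V) : Prop :=
  ∃ V₁ V₂ : Set V, V₁.Nonempty ∧ V₂.Nonempty ∧ Disjoint V₁ V₂ ∧ V₁ ∪ V₂ = J ∧
    ∀ v ∈ V₁, ∀ w ∈ V₂, Γ.Adj v w

/-- The special subgroup generated by a set of vertices. -/
def special {V : Type*} (Γ : SimpleGraph V) (S₁ : Set V) : Subgroup (RACG Γ) :=
  Subgroup.closure (gen Γ '' S₁)

/-- The conjugate subgroup `gHg⁻¹`. -/
def conjSubgroup {G : Type*} [Group G] (g : G) (H : Subgroup G) : Subgroup G :=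
  H.map (MulAut.conj g).toMonoidHom

/-- `x` lies in some join subgroup of `RACG Γ`. -/
def InJoinSubgroup {V : Type*} (Γ : SimpleGraph V) (x : RACG Γ) : Prop :=
  ∃ J : Set V, IsJoin Γ J ∧ x ∈ special Γ J

/-- An infinite subgroup is join-free if none of its infinite-order elements is
conjugate into a join subgroup. -/
def JoinFree {V : Type*} (Γ : SimpleGraph V) (H : Subgroup (RACG Γ)) : Prop :=
  (H : Set (RACG Γ)).Infinite ∧
    ∀ h ∈ H, ¬ IsOfFinOrder h → ∀ g : RACG Γ, ¬ InJoinSubgroup Γ (g * h * g⁻¹)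

/-- The star of a vertex: the vertex together with its neighbours. -/
def starSet {V : Type*} (Γ : SimpleGraph V) (v : V) : Set V :=
  {v} ∪ {w | Γ.Adj v w}

/-- `x` lies in some star subgroup of `RACG Γ`. -/
def InStarSubgroup {V : Type*} (Γ : SimpleGraph V) (x : RACG Γ) : Prop :=
  ∃ v : V, x ∈ special Γ (starSet Γ v)

/-- An infinite subgroup is star-free if none of its infinite-order elements is
conjugate into a star subgroup. -/
def StarFree {V : Type*} (Γ : SimpleGraph V) (H : Subgroup (RACG Γ)) : Prop :=
  (H : Set (RACG Γ)).Infinite ∧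
    ∀ h ∈ H, ¬ IsOfFinOrder h → ∀ g : RACG Γ, ¬ InStarSubgroup Γ (g * h * g⁻¹)

/-- Word length with respect to a (symmetrized) set `T` of group elements. -/
noncomputable def wlen {G : Type*} [Group G] (T : Set G) (g : G) : ℕ :=
  sInf {n | ∃ l : List G, (∀ x ∈ l, x ∈ T ∨ x⁻¹ ∈ T) ∧ l.length = n ∧ l.prod = g}

/-- A finitely generated subgroup of `RACG Γ` is undistorted if the inclusion is a
quasi-isometric embedding with respect to word metrics. -/
def Undistorted {V : Type*} (Γ : SimpleGraph V) (H : Subgroup (RACG Γ)) : Prop :=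
  ∃ T : Finset (RACG Γ), (T : Set (RACG Γ)) ⊆ (H : Set (RACG Γ)) ∧
    Subgroup.closure (T : Set (RACG Γ)) = H ∧
    ∃ K C : ℝ, 1 ≤ K ∧ 0 ≤ C ∧ ∀ h ∈ H,
      (wlen (T : Set (RACG Γ)) h : ℝ) / K - C ≤ (len Γ h : ℝ) ∧
      (len Γ h : ℝ) ≤ K * (wlen (T : Set (RACG Γ)) h : ℝ) + C

/-- A subgroup is stable if it is undistorted and quasi-geodesics with common
endpoints on it uniformly fellow-travel. -/
def Stable {V : Type*} (Γ : SimpleGraph V) (H : Subgroup (RACG Γ)) : Prop :=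
  Undistorted Γ H ∧ ∀ K C : ℝ, 1 ≤ K → 0 ≤ C → ∃ M : ℝ, 0 ≤ M ∧
    ∀ (a b a' b' : ℤ) (γ γ' : ℤ → RACG Γ),
      IsQuasiGeodesic Γ K C a b γ → IsQuasiGeodesic Γ K C a' b' γ' →
      γ a = γ' a' → γ b = γ' b' → γ a ∈ H → γ b ∈ H →
      (∀ i ∈ Set.Icc a b, ∃ j ∈ Set.Icc a' b', (wdist Γ (γ i) (γ' j) : ℝ) ≤ M) ∧
      (∀ j ∈ Set.Icc a' b', ∃ i ∈ Set.Icc a b, (wdist Γ (γ i) (γ' j) : ℝ) ≤ M)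

/-- `H` is `N`-join-busting: every join subword of a reduced word representing an
element of `H` has length at most `N`. -/
def JoinBusting {V : Type*} (Γ : SimpleGraph V) (H : Subgroup (RACG Γ)) (N : ℕ) : Prop :=
  ∀ h ∈ H, ∀ w : List V, (w.map (gen Γ)).prod = h → w.length = len Γ h →
    ∀ β : List V, β <:+: w → InJoinSubgroup Γ (β.map (gen Γ)).prod → β.length ≤ N

/-- `a b c d` is an induced four-cycle (in this cyclic order), with diagonals
`(a, c)` and `(b, d)`. -/
def IsInducedFourCycle {V : Type*} (Γ : SimpleGraph V) (a b c d : V) : Prop :=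
  a ≠ c ∧ b ≠ d ∧ ¬ Γ.Adj a c ∧ ¬ Γ.Adj b d ∧
    Γ.Adj a b ∧ Γ.Adj b c ∧ Γ.Adj c d ∧ Γ.Adj d a

/-- A set of vertices is the vertex set of an induced four-cycle. -/
def IsFourCycleSet {V : Type*} (Γ : SimpleGraph V) (Q : Set V) : Prop :=
  ∃ a b c d : V, Q = {a, b, c, d} ∧ IsInducedFourCycle Γ a b c d

/-- The four-cycle graph `Γ⁴`: vertices are induced four-cycles of `Γ`, adjacent
when they share a pair of non-adjacent vertices. -/
def fourCycleGraph {V : Type*} (Γ : SimpleGraph V) :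
    SimpleGraph {Q : Set V // IsFourCycleSet Γ Q} :=
  SimpleGraph.fromRel (fun Q Q' => ∃ u v : V, u ≠ v ∧ ¬ Γ.Adj u v ∧
    u ∈ (Q : Set V) ∩ (Q' : Set V) ∧ v ∈ (Q : Set V) ∩ (Q' : Set V))

/-- A connected component of `Γ⁴` whose support is the whole vertex set of `Γ`. -/
def FullSupportComponent {V : Type*} (Γ : SimpleGraph V)
    (C : (fourCycleGraph Γ).ConnectedComponent) : Prop :=
  ∀ v : V, ∃ Q : {Q : Set V // IsFourCycleSet Γ Q},
    (fourCycleGraph Γ).connectedComponentMk Q = C ∧ v ∈ (Q : Set V)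

/-- `Γ` is CFS: some component of `Γ⁴` has full support. -/
def CFS {V : Type*} (Γ : SimpleGraph V) : Prop :=
  ∃ C : (fourCycleGraph Γ).ConnectedComponent, FullSupportComponent Γ C

/-- Length (number of edges) of a shortest edge path from `x` to `y` in the Cayley
graph all of whose vertices are at distance at least `c` from `H`. -/
noncomputable def avoidDist {V : Type*} (Γ : SimpleGraph V) (H : Subgroup (RACG Γ))
    (c : ℝ) (x y : RACG Γ) : ℝ≥0∞ :=
  ⨅ (l : List (RACG Γ)) (_ : l.head? = some x) (_ : l.getLast? = some y)
    (_ : l.Chain' fun a b => wdist Γ a b = 1)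
    (_ : ∀ z ∈ l, c ≤ (distH Γ H z : ℝ)), ((l.length - 1 : ℕ) : ℝ≥0∞)

/-- The subgroup divergence functions `σⁿ_ρ` of `H` in `RACG Γ`. -/
noncomputable def divFun {V : Type*} (Γ : SimpleGraph V) (H : Subgroup (RACG Γ))
    (ρ : ℝ) (n : ℕ) (r : ℝ) : ℝ≥0∞ :=
  ⨅ (x : RACG Γ) (y : RACG Γ) (_ : (distH Γ H x : ℝ) = r)
    (_ : (distH Γ H y : ℝ) = r) (_ : avoidDist Γ H r x y ≠ ⊤)
    (_ : (n : ℝ) * r ≤ (wdist Γ x y : ℝ)), avoidDist Γ H (ρ * r) x y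

/-- Domination of functions: `f(x) ≤ A g(Bx) + Cx` for large `x`. -/
def FunDom (f g : ℝ → ℝ≥0∞) : Prop :=
  ∃ A B C D : ℝ, 0 < A ∧ 0 < B ∧ 0 < C ∧ 0 < D ∧
    ∀ x : ℝ, D < x → f x ≤ ENNReal.ofReal A * g (B * x) + ENNReal.ofReal (C * x)

/-- Domination of families of divergence functions. -/
def FamDom (δ δ' : ℝ → ℕ → ℝ → ℝ≥0∞) : Prop :=
  ∃ L : ℝ, L ∈ Set.Ioc (0 : ℝ) 1 ∧ ∃ M : ℕ, 0 < M ∧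
    ∀ ρ ∈ Set.Ioc (0 : ℝ) 1, ∀ n : ℕ, 2 ≤ n → FunDom (δ (L * ρ) n) (δ' ρ (M * n))

/-- A family of divergence functions is equivalent to a single function. -/
def FamEquivFun (δ : ℝ → ℕ → ℝ → ℝ≥0∞) (f : ℝ → ℝ≥0∞) : Prop :=
  FamDom δ (fun _ _ => f) ∧ FamDom (fun _ _ => f) δ

/-- Height at most `n`: any `n+1` pairwise distinct cosets give conjugates with
finite total intersection. -/
def HeightAtMost {G : Type*} [Group G] (H : Subgroup G) (n : ℕ) : Prop :=
  ∀ f : Fin (n + 1) → G, (∀ i j, i ≠ j → (f i)⁻¹ * f j ∉ H) →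
    {x : G | ∀ i, (f i)⁻¹ * x * f i ∈ H}.Finite

/-- `H` has finite height in `G`. -/
def FiniteHeight {G : Type*} [Group G] (H : Subgroup G) : Prop :=
  ∃ n : ℕ, HeightAtMost H n

/-!
A join decomposition `V = V₁ ⊔ V₂` writes `G_Γ` as the product `A B` of the two special subgroups
`A = ⟨V₁⟩`, `B = ⟨V₂⟩`, which commute elementwise and are nontrivial. A malnormal subgroup contains
the centralizer of each of its nontrivial elements. If `1 ≠ ab ∈ H`, then `a` centralizes `ab`,
so `a, b ∈ H`; if say `a ≠ 1`, then `B ≤ C(a) ≤ H`, and then `A ≤ C(b') ≤ H` for any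
`1 ≠ b' ∈ B`. Hence `H = G_Γ` as soon as `H ≠ 1`, in particular whenever `H` is infinite.
-/

section Malnormal

variable {G : Type*} [Group G] {H A B : Subgroup G}

theorem Malnormal.centralizer_le (hH : Malnormal H) {h : G} (hh : h ∈ H) (h1 : h ≠ 1) :
    Subgroup.centralizer {h} ≤ H := by
  intro g hg
  by_contra hgH
  refine h1 (hH g hgH h hh ?_)
  rwa [mul_assoc, ← Subgroup.mem_centralizer_singleton_iff.1 hg, inv_mul_cancel_left]

theorem Malnormal.sup_le_of_mem (hH : Malnormal H) (hAB : A ≤ Subgroup.centralizer B)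
    (hB : B ≠ ⊥) {a : G} (haA : a ∈ A) (haH : a ∈ H) (ha1 : a ≠ 1) : A ⊔ B ≤ H := by
  have hBH : B ≤ H := fun b hb =>
    hH.centralizer_le haH ha1 <| Subgroup.mem_centralizer_singleton_iff.2
      (Subgroup.mem_centralizer_iff.1 (hAB haA) b hb)
  obtain ⟨b, hbB, hb1⟩ := B.bot_or_exists_ne_one.resolve_left hB
  have hAH : A ≤ H := fun a' ha' =>
    hH.centralizer_le (hBH hbB) hb1 <| Subgroup.mem_centralizer_singleton_iff.2
      (Subgroup.mem_centralizer_iff.1 (hAB ha') b hbB).symm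
  exact sup_le hAH hBH

theorem Malnormal.eq_top_of_sup_eq_top (hH : Malnormal H) (hH1 : H ≠ ⊥)
    (hAB : A ≤ Subgroup.centralizer B) (hsup : A ⊔ B = ⊤) (hA : A ≠ ⊥) (hB : B ≠ ⊥) :
    H = ⊤ := by
  obtain ⟨h, hh, hh1⟩ := H.bot_or_exists_ne_one.resolve_left hH1
  have hprod : (h : G) ∈ (A : Set G) * B := by
    rw [← Subgroup.coe_mul_of_left_le_normalizer_right A B
      (hAB.trans (Subgroup.centralizer_le_normalizer _)), hsup]
    trivial
  obtain ⟨a, haA, b, hbB, rfl⟩ := hprod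
  have hcomm : b * a = a * b := Subgroup.mem_centralizer_iff.1 (hAB haA) b hbB
  have haH : a ∈ H := hH.centralizer_le hh hh1 <| Subgroup.mem_centralizer_singleton_iff.2 <| by
    rw [← mul_assoc, mul_assoc a b a, hcomm, mul_assoc]
  have hbH : b ∈ H := by simpa using H.mul_mem (H.inv_mem haH) hh
  refine top_le_iff.1 (hsup ▸ ?_)
  by_cases ha1 : a = 1
  · have hb1 : b ≠ 1 := by rintro rfl; simp [ha1] at hh1
    rw [sup_comm]
    exact hH.sup_le_of_mem (Subgroup.le_centralizer_iff.1 hAB) hA hbB hbH hb1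
  · exact hH.sup_le_of_mem hAB hB haA haH ha1

end Malnormal

section Generators

variable {V : Type*} (Γ : SimpleGraph V)

theorem gen_mul_self (v : V) : gen Γ v * gen Γ v = 1 :=
  PresentedGroup.one_of_mem (rels := racgRels Γ) (Or.inl ⟨v, rfl⟩)

theorem gen_inv (v : V) : (gen Γ v)⁻¹ = gen Γ v :=
  inv_eq_of_mul_eq_one_left (gen_mul_self Γ v)

theorem gen_commute {v w : V} (h : Γ.Adj v w) : Commute (gen Γ v) (gen Γ w) := by
  have hsq : (gen Γ v * gen Γ w) ^ 2 = 1 :=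
    PresentedGroup.one_of_mem (rels := racgRels Γ) (Or.inr ⟨v, w, h, rfl⟩)
  have hinv : gen Γ v * gen Γ w = (gen Γ v * gen Γ w)⁻¹ :=
    eq_inv_of_mul_eq_one_left (by rwa [← sq])
  rw [Commute, SemiconjBy, hinv, mul_inv_rev, gen_inv, gen_inv]

/-- Every generator maps to `-1` under the sign character `G_Γ → ℤˣ`. -/
theorem gen_ne_one (v : V) : gen Γ v ≠ 1 := by
  have hrels : ∀ r ∈ racgRels Γ, FreeGroup.lift (fun _ : V => (-1 : ℤˣ)) r = 1 := by
    rintro r (⟨v, rfl⟩ | ⟨v, w, _, rfl⟩) <;> simp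
  intro h
  have hsign : PresentedGroup.toGroup hrels (gen Γ v) = -1 := PresentedGroup.toGroup.of hrels
  rw [h] at hsign
  exact absurd ((map_one _).symm.trans hsign) (by decide)

theorem special_ne_bot {S : Set V} (hS : S.Nonempty) : special Γ S ≠ ⊥ := by
  obtain ⟨v, hv⟩ := hS
  intro hbot
  have hmem : gen Γ v ∈ special Γ S := Subgroup.subset_closure ⟨v, hv, rfl⟩
  exact gen_ne_one Γ v (Subgroup.mem_bot.1 (hbot ▸ hmem))

theorem special_sup_special (S T : Set V) : special Γ S ⊔ special Γ T = special Γ (S ∪ T) := by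
  rw [special, special, special, Set.image_union, Subgroup.closure_union]

theorem special_univ : special Γ Set.univ = ⊤ := by
  rw [special, Set.image_univ]
  exact PresentedGroup.closure_range_of _

theorem special_le_centralizer_special {S T : Set V} (hST : ∀ v ∈ S, ∀ w ∈ T, Γ.Adj v w) :
    special Γ S ≤ Subgroup.centralizer (special Γ T) := by
  rw [special, Subgroup.closure_le, special, Subgroup.centralizer_closure]
  rintro _ ⟨v, hv, rfl⟩
  exact Subgroup.mem_centralizer_iff.2 fun _ ⟨w, hw, hgw⟩ =>
    hgw ▸ (gen_commute Γ (hST v hv w hw)).symm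

end Generators

end RACGPaper

open RACGPaper in
theorem join_no_infinite_proper_malnormal_general
    {V : Type*} (Γ : SimpleGraph V)
    (hj : IsJoin Γ (Set.univ : Set V)) :
    ¬ ∃ H : Subgroup (RACG Γ),
        (H : Set (RACG Γ)).Infinite ∧ H ≠ ⊤ ∧ Malnormal H := by
  rintro ⟨H, hInf, hTop, hmal⟩
  obtain ⟨V₁, V₂, hV₁, hV₂, -, hunion, hadj⟩ := hj
  have hH1 : H ≠ ⊥ := by
    rintro rfl
    exact hInf (by simp)
  exact hTop <| hmal.eq_top_of_sup_eq_top hH1 (special_le_centralizer_special Γ hadj)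
    (by rw [special_sup_special, hunion, special_univ])
    (special_ne_bot Γ hV₁) (special_ne_bot Γ hV₂)

open RACGPaper in
/-- if the defining graph is a join, the RACG has no infinite proper
malnormal subgroup. -/
theorem join_no_infinite_proper_malnormal
    {V : Type*} [Fintype V] (Γ : SimpleGraph V)
    (hj : IsJoin Γ (Set.univ : Set V)) :
    ¬ ∃ H : Subgroup (RACG Γ),
        (H : Set (RACG Γ)).Infinite ∧ H ≠ ⊤ ∧ Malnormal H :=
  join_no_infinite_proper_malnormal_general Γ hj
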